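/- arXiv:math-ph/0001011 — 2 statements merged into one kernel-verified Lean document; each statement's English description precedes it below -/
import Mathlib

section
/- Let T be a braided operator on H ⊗ H with the operators P_n defined as usual. Then (1 ⊗ P_n)(T_1 T_2 ⋯ T_n) = (T_1 T_2 ⋯ T_n)(P_n ⊗ 1) on H^{⊗(n+1)}. -/
open scoped ComplexOrder

namespace Wick

/-- The operator `T_i = 1^{⊗(i-1)} ⊗ T ⊗ 1^{⊗(n-i-1)}` on `H^{⊗n}` (1-indexed, acting on
tensor factors `i` and `i+1`), where `H = ℂ^d` and `H^{⊗n}` is identified with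
functions `(Fin n → Fin d) → ℂ` via the basis of elementary tensors. -/
noncomputable def Ti (d n : ℕ) (T : Matrix (Fin d × Fin d) (Fin d × Fin d) ℂ) (i : ℕ) :
    Matrix (Fin n → Fin d) (Fin n → Fin d) ℂ :=
  if h : 1 ≤ i ∧ i < n then
    fun w w' =>
      T (w ⟨i - 1, by omega⟩, w ⟨i, h.2⟩) (w' ⟨i - 1, by omega⟩, w' ⟨i, h.2⟩) *
        ∏ j : Fin n, if (j : ℕ) = i - 1 ∨ (j : ℕ) = i then 1 else (if w j = w' j then 1 else 0)
  else 1

/-- The product `T_1 T_2 ⋯ T_k` on `H^{⊗n}`. -/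
noncomputable def prodT (d n : ℕ) (T : Matrix (Fin d × Fin d) (Fin d × Fin d) ℂ) (k : ℕ) :
    Matrix (Fin n → Fin d) (Fin n → Fin d) ℂ :=
  ((List.range k).map (fun j => Ti d n T (j + 1))).prod

/-- The reversed product `T_k T_{k-1} ⋯ T_1` on `H^{⊗n}`. -/
noncomputable def prodTrev (d n : ℕ) (T : Matrix (Fin d × Fin d) (Fin d × Fin d) ℂ) (k : ℕ) :
    Matrix (Fin n → Fin d) (Fin n → Fin d) ℂ :=
  ((List.range k).map (fun j => Ti d n T (k - j))).prod

/-- `R_n = 1 + T_1 + T_1 T_2 + ⋯ + T_1 T_2 ⋯ T_{n-1}` on `H^{⊗n}`. -/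
noncomputable def Rmat (d n : ℕ) (T : Matrix (Fin d × Fin d) (Fin d × Fin d) ℂ) :
    Matrix (Fin n → Fin d) (Fin n → Fin d) ℂ :=
  ∑ k ∈ Finset.range n, prodT d n T k

/-- `1 ⊗ A` on `H^{⊗(n+1)}`, for `A` an operator on `H^{⊗n}`. -/
noncomputable def oneTensor (d n : ℕ) (A : Matrix (Fin n → Fin d) (Fin n → Fin d) ℂ) :
    Matrix (Fin (n + 1) → Fin d) (Fin (n + 1) → Fin d) ℂ :=
  fun w w' => (if w 0 = w' 0 then 1 else 0) * A (fun j => w j.succ) (fun j => w' j.succ)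

/-- `A ⊗ 1` on `H^{⊗(n+1)}`, for `A` an operator on `H^{⊗n}`. -/
noncomputable def tensorOne (d n : ℕ) (A : Matrix (Fin n → Fin d) (Fin n → Fin d) ℂ) :
    Matrix (Fin (n + 1) → Fin d) (Fin (n + 1) → Fin d) ℂ :=
  fun w w' =>
    A (fun j => w j.castSucc) (fun j => w' j.castSucc) *
      (if w (Fin.last n) = w' (Fin.last n) then 1 else 0)

/-- The operators `P_n` on `H^{⊗n}`: `P_1 = 1`, `P_{n+1} = (1 ⊗ P_n) R_{n+1}`
(so `P_2 = R_2 = 1 + T`). -/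
noncomputable def Pmat (d : ℕ) (T : Matrix (Fin d × Fin d) (Fin d × Fin d) ℂ) :
    (n : ℕ) → Matrix (Fin n → Fin d) (Fin n → Fin d) ℂ
  | 0 => 1
  | n + 1 => oneTensor d n (Pmat d T n) * Rmat d (n + 1) T

/-- `U_n = (T_1 ⋯ T_n)(T_1 ⋯ T_{n-1}) ⋯ (T_1 T_2) T_1` on `H^{⊗m}`. -/
noncomputable def Umat (d m : ℕ) (T : Matrix (Fin d × Fin d) (Fin d × Fin d) ℂ) (n : ℕ) :
    Matrix (Fin m → Fin d) (Fin m → Fin d) ℂ :=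
  ((List.range n).map (fun j => prodT d m T (n - j))).prod

/-- The braid condition `T_1 T_2 T_1 = T_2 T_1 T_2` on `H^{⊗3}`. -/
def Braided (d : ℕ) (T : Matrix (Fin d × Fin d) (Fin d × Fin d) ℂ) : Prop :=
  Ti d 3 T 1 * Ti d 3 T 2 * Ti d 3 T 1 = Ti d 3 T 2 * Ti d 3 T 1 * Ti d 3 T 2

/-- Elementary tensor `X ⊗ Y ∈ H^{⊗(n+m)}`. -/
noncomputable def tensorVec {d n m : ℕ} (X : (Fin n → Fin d) → ℂ) (Y : (Fin m → Fin d) → ℂ) :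
    (Fin (n + m) → Fin d) → ℂ :=
  fun u => X (fun i => u (Fin.castAdd m i)) * Y (fun j => u (Fin.natAdd n j))

/-! `A ↦ 1 ⊗ A` and `A ↦ A ⊗ 1` are ring homomorphisms and `P_n` lies in the subsemiring generated
by `T_1, …, T_{n-1}`, so it suffices to check the identity on a generator `T_k`, where it is the
intertwining relation `T_{k+1} (T_1 ⋯ T_n) = (T_1 ⋯ T_n) T_k`. That relation follows by induction on
`k` from the factorization `T_1 ⋯ T_n = T_1 (1 ⊗ T_1 ⋯ T_{n-1})`, the braid relation, and the fact
that `T_1` commutes with every operator of the form `1 ⊗ 1 ⊗ X`. -/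

open scoped Kronecker

def _root_.RingHom.intertwiners {R S : Type*} [Semiring R] [Semiring S] (f g : R →+* S) (x : S) :
    Subsemiring R where
  carrier := {a | f a * x = x * g a}
  mul_mem' {a b} ha hb := by
    simp only [Set.mem_ofPred_eq, map_mul] at *
    rw [mul_assoc, hb, ← mul_assoc, ha, mul_assoc]
  one_mem' := by simp
  add_mem' ha hb := by
    simp only [Set.mem_ofPred_eq, map_add, add_mul, mul_add] at *
    rw [ha, hb]
  zero_mem' := by simp

theorem oneTensor_eq_reindex_kronecker (d n : ℕ) (A : Matrix (Fin n → Fin d) (Fin n → Fin d) ℂ) :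
    oneTensor d n A = Matrix.reindex (Fin.consEquiv _) (Fin.consEquiv _) (1 ⊗ₖ A) := by
  ext w w'
  simp [oneTensor, Matrix.one_apply, Fin.tail_def]

theorem tensorOne_eq_reindex_kronecker (d n : ℕ) (A : Matrix (Fin n → Fin d) (Fin n → Fin d) ℂ) :
    tensorOne d n A = Matrix.reindex ((Equiv.prodComm _ _).trans (Fin.snocEquiv _))
      ((Equiv.prodComm _ _).trans (Fin.snocEquiv _)) (A ⊗ₖ 1) := by
  ext w w'
  simp [tensorOne, Matrix.one_apply, Fin.init_def]

noncomputable def oneTensorHom (d n : ℕ) :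
    Matrix (Fin n → Fin d) (Fin n → Fin d) ℂ →+*
      Matrix (Fin (n + 1) → Fin d) (Fin (n + 1) → Fin d) ℂ where
  toFun := oneTensor d n
  map_one' := by
    simp only [oneTensor_eq_reindex_kronecker, ← Matrix.coe_reindexAlgEquiv ℂ ℂ,
      Matrix.one_kronecker_one, map_one]
  map_mul' A B := by
    simp only [oneTensor_eq_reindex_kronecker, ← Matrix.coe_reindexAlgEquiv ℂ ℂ, ← map_mul,
      ← Matrix.mul_kronecker_mul, one_mul]
  map_zero' := by
    simp only [oneTensor_eq_reindex_kronecker, ← Matrix.coe_reindexAlgEquiv ℂ ℂ,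
      Matrix.kronecker_zero, map_zero]
  map_add' A B := by
    simp only [oneTensor_eq_reindex_kronecker, ← Matrix.coe_reindexAlgEquiv ℂ ℂ, ← map_add,
      Matrix.kronecker_add]

noncomputable def tensorOneHom (d n : ℕ) :
    Matrix (Fin n → Fin d) (Fin n → Fin d) ℂ →+*
      Matrix (Fin (n + 1) → Fin d) (Fin (n + 1) → Fin d) ℂ where
  toFun := tensorOne d n
  map_one' := by
    simp only [tensorOne_eq_reindex_kronecker, ← Matrix.coe_reindexAlgEquiv ℂ ℂ,
      Matrix.one_kronecker_one, map_one]
  map_mul' A B := by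
    simp only [tensorOne_eq_reindex_kronecker, ← Matrix.coe_reindexAlgEquiv ℂ ℂ, ← map_mul,
      ← Matrix.mul_kronecker_mul, one_mul]
  map_zero' := by
    simp only [tensorOne_eq_reindex_kronecker, ← Matrix.coe_reindexAlgEquiv ℂ ℂ,
      Matrix.zero_kronecker, map_zero]
  map_add' A B := by
    simp only [tensorOne_eq_reindex_kronecker, ← Matrix.coe_reindexAlgEquiv ℂ ℂ, ← map_add,
      Matrix.add_kronecker]

@[simp]
theorem oneTensorHom_apply (d n : ℕ) (A : Matrix (Fin n → Fin d) (Fin n → Fin d) ℂ) :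
    oneTensorHom d n A = oneTensor d n A :=
  rfl

@[simp]
theorem tensorOneHom_apply (d n : ℕ) (A : Matrix (Fin n → Fin d) (Fin n → Fin d) ℂ) :
    tensorOneHom d n A = tensorOne d n A :=
  rfl

@[simp]
theorem oneTensor_one (d n : ℕ) : oneTensor d n 1 = 1 :=
  map_one (oneTensorHom d n)

@[simp]
theorem tensorOne_one (d n : ℕ) : tensorOne d n 1 = 1 :=
  map_one (tensorOneHom d n)

theorem oneTensor_mul (d n : ℕ) (A B : Matrix (Fin n → Fin d) (Fin n → Fin d) ℂ) :
    oneTensor d n (A * B) = oneTensor d n A * oneTensor d n B :=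
  map_mul (oneTensorHom d n) A B

theorem tensorOne_mul (d n : ℕ) (A B : Matrix (Fin n → Fin d) (Fin n → Fin d) ℂ) :
    tensorOne d n (A * B) = tensorOne d n A * tensorOne d n B :=
  map_mul (tensorOneHom d n) A B

theorem Ti_eq_one {d n : ℕ} (T : Matrix (Fin d × Fin d) (Fin d × Fin d) ℂ) {i : ℕ}
    (h : ¬(1 ≤ i ∧ i < n)) : Ti d n T i = 1 :=
  dif_neg h

theorem Ti_apply {d n : ℕ} (T : Matrix (Fin d × Fin d) (Fin d × Fin d) ℂ) {i : ℕ}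
    (h : 1 ≤ i ∧ i < n) (w w' : Fin n → Fin d) :
    Ti d n T i w w' =
      T (w ⟨i - 1, by omega⟩, w ⟨i, h.2⟩) (w' ⟨i - 1, by omega⟩, w' ⟨i, h.2⟩) *
        ∏ j : Fin n, if (j : ℕ) = i - 1 ∨ (j : ℕ) = i then 1 else if w j = w' j then 1 else 0 := by
  unfold Ti
  exact congrArg (fun M : Matrix (Fin n → Fin d) (Fin n → Fin d) ℂ => M w w') (dif_pos h)

theorem oneTensor_Ti {d n : ℕ} (T : Matrix (Fin d × Fin d) (Fin d × Fin d) ℂ) {i : ℕ}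
    (hi : 1 ≤ i) : oneTensor d n (Ti d n T i) = Ti d (n + 1) T (i + 1) := by
  by_cases h : i < n
  · ext w w'
    have hfactors : ∀ j : Fin n,
        (j : ℕ) = i - 1 ∨ (j : ℕ) = i ↔ (j : ℕ) + 1 = i ∨ (j : ℕ) + 1 = i + 1 := by omega
    simp only [oneTensor, Ti_apply T ⟨hi, h⟩, Ti_apply T (show 1 ≤ i + 1 ∧ i + 1 < n + 1 by omega)]
    rw [Fin.prod_univ_succ]
    simp only [Fin.val_zero, Fin.val_succ, Fin.succ_mk, Nat.add_sub_cancel, hfactors,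
      show i - 1 + 1 = i by omega, if_neg (show ¬(0 = i ∨ 0 = i + 1) by omega)]
    ring
  · rw [Ti_eq_one T (by omega), Ti_eq_one T (by omega), oneTensor_one]

theorem tensorOne_Ti {d n : ℕ} (T : Matrix (Fin d × Fin d) (Fin d × Fin d) ℂ) {i : ℕ}
    (hi : 1 ≤ i) (h : i < n) : tensorOne d n (Ti d n T i) = Ti d (n + 1) T i := by
  ext w w'
  simp only [tensorOne, Ti_apply T ⟨hi, h⟩, Ti_apply T (show 1 ≤ i ∧ i < n + 1 by omega),
    Fin.prod_univ_castSucc, Fin.val_castSucc, Fin.val_last, Fin.castSucc_mk,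
    if_neg (show ¬(n = i - 1 ∨ n = i) by omega)]
  ring

def pairEquiv (d m : ℕ) : ((Fin d × Fin d) × (Fin m → Fin d)) ≃ (Fin (m + 2) → Fin d) :=
  (Equiv.prodAssoc _ _ _).trans
    (((Equiv.refl _).prodCongr (Fin.consEquiv fun _ : Fin (m + 1) => Fin d)).trans
      (Fin.consEquiv fun _ : Fin (m + 2) => Fin d))

theorem Ti_one_eq_reindex_kronecker (d m : ℕ) (T : Matrix (Fin d × Fin d) (Fin d × Fin d) ℂ) :
    Ti d (m + 2) T 1 = Matrix.reindex (pairEquiv d m) (pairEquiv d m) (T ⊗ₖ 1) := by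
  ext w w'
  simp [Ti, pairEquiv, Fin.prod_univ_succ, Matrix.one_apply, Finset.prod_boole, funext_iff,
    Fin.tail_def]

theorem oneTensor_oneTensor_eq_reindex_kronecker (d m : ℕ)
    (X : Matrix (Fin m → Fin d) (Fin m → Fin d) ℂ) :
    oneTensor d (m + 1) (oneTensor d m X) =
      Matrix.reindex (pairEquiv d m) (pairEquiv d m) (1 ⊗ₖ X) := by
  ext w w'
  by_cases h0 : w 0 = w' 0 <;> by_cases h1 : w 1 = w' 1 <;>
    simp [oneTensor, pairEquiv, h0, h1, Fin.tail_def]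

theorem commute_Ti_one_oneTensor_oneTensor (d m : ℕ)
    (T : Matrix (Fin d × Fin d) (Fin d × Fin d) ℂ) (X : Matrix (Fin m → Fin d) (Fin m → Fin d) ℂ) :
    Commute (Ti d (m + 2) T 1) (oneTensor d (m + 1) (oneTensor d m X)) := by
  rw [Ti_one_eq_reindex_kronecker, oneTensor_oneTensor_eq_reindex_kronecker,
    ← Matrix.coe_reindexAlgEquiv ℂ ℂ]
  refine Commute.map ?_ _
  rw [Commute, SemiconjBy, ← Matrix.mul_kronecker_mul, ← Matrix.mul_kronecker_mul, mul_one,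
    one_mul, one_mul, mul_one]

theorem Ti_one_mul_Ti_two_mul_Ti_one {d m : ℕ} {T : Matrix (Fin d × Fin d) (Fin d × Fin d) ℂ}
    (hbraid : Braided d T) (hm : 3 ≤ m) :
    Ti d m T 1 * Ti d m T 2 * Ti d m T 1 = Ti d m T 2 * Ti d m T 1 * Ti d m T 2 := by
  induction m, hm using Nat.le_induction with
  | base => exact hbraid
  | succ m hm ih =>
    rw [← tensorOne_Ti T le_rfl (by omega), ← tensorOne_Ti T one_le_two (by omega),
      ← tensorOne_mul, ← tensorOne_mul, ih, tensorOne_mul, tensorOne_mul]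

theorem prodT_succ_eq_Ti_one_mul_oneTensor (d m : ℕ)
    (T : Matrix (Fin d × Fin d) (Fin d × Fin d) ℂ) (l : ℕ) :
    prodT d (m + 1) T (l + 1) = Ti d (m + 1) T 1 * oneTensor d m (prodT d m T l) := by
  rw [prodT, List.range_succ_eq_map, List.map_cons, List.prod_cons, prodT, ← oneTensorHom_apply,
    map_list_prod, List.map_map, List.map_map]
  congr 2
  exact List.map_congr_left fun j _ => (oneTensor_Ti T (Nat.succ_pos j)).symm

theorem Ti_succ_mul_prodT {d m : ℕ} {T : Matrix (Fin d × Fin d) (Fin d × Fin d) ℂ}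
    (hbraid : Braided d T) {k l : ℕ} (hk : 1 ≤ k) (hkl : k < l) (hlm : l < m) :
    Ti d m T (k + 1) * prodT d m T l = prodT d m T l * Ti d m T k := by
  induction k, hk using Nat.le_induction generalizing m l with
  | base =>
    obtain ⟨m, rfl⟩ : ∃ m', m = m' + 2 := ⟨m - 2, by omega⟩
    obtain ⟨l, rfl⟩ : ∃ l', l = l' + 2 := ⟨l - 2, by omega⟩
    set Q := oneTensor d (m + 1) (oneTensor d m (prodT d m T l))
    have hsplit : prodT d (m + 2) T (l + 2) = Ti d (m + 2) T 1 * Ti d (m + 2) T 2 * Q := by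
      rw [prodT_succ_eq_Ti_one_mul_oneTensor, prodT_succ_eq_Ti_one_mul_oneTensor, oneTensor_mul,
        oneTensor_Ti T le_rfl, mul_assoc]
    have hQ : Commute (Ti d (m + 2) T 1) Q := commute_Ti_one_oneTensor_oneTensor d m T _
    rw [hsplit, ← mul_assoc, ← mul_assoc, ← Ti_one_mul_Ti_two_mul_Ti_one hbraid (by omega),
      mul_assoc _ (Ti d (m + 2) T 1), hQ.eq, ← mul_assoc]
  | succ k hk ih =>
    obtain ⟨m, rfl⟩ : ∃ m', m = m' + 2 := ⟨m - 2, by omega⟩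
    obtain ⟨l, rfl⟩ : ∃ l', l = l' + 1 := ⟨l - 1, by omega⟩
    have hcomm : Commute (Ti d (m + 2) T 1) (Ti d (m + 2) T (k + 2)) := by
      have h := commute_Ti_one_oneTensor_oneTensor d m T (Ti d m T k)
      rwa [oneTensor_Ti T hk, oneTensor_Ti T (by omega)] at h
    rw [prodT_succ_eq_Ti_one_mul_oneTensor, ← mul_assoc, ← hcomm.eq, mul_assoc,
      ← oneTensor_Ti T (by omega : 1 ≤ k + 1), ← oneTensor_mul, ih (by omega) (by omega),
      oneTensor_mul, oneTensor_Ti T hk, mul_assoc]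

theorem prodT_mem_closure (d n : ℕ) (T : Matrix (Fin d × Fin d) (Fin d × Fin d) ℂ) (k : ℕ) :
    prodT d n T k ∈ Subsemiring.closure (Set.range (Ti d n T)) :=
  list_prod_mem fun _ hx => by
    obtain ⟨j, -, rfl⟩ := List.mem_map.1 hx
    exact Subsemiring.subset_closure (Set.mem_range_self _)

theorem oneTensor_mem_closure {d n : ℕ} {T : Matrix (Fin d × Fin d) (Fin d × Fin d) ℂ}
    {A : Matrix (Fin n → Fin d) (Fin n → Fin d) ℂ}
    (hA : A ∈ Subsemiring.closure (Set.range (Ti d n T))) :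
    oneTensor d n A ∈ Subsemiring.closure (Set.range (Ti d (n + 1) T)) := by
  suffices Subsemiring.closure (Set.range (Ti d n T)) ≤
      (Subsemiring.closure (Set.range (Ti d (n + 1) T))).comap (oneTensorHom d n) from this hA
  rw [Subsemiring.closure_le]
  rintro _ ⟨i, rfl⟩
  rcases Nat.eq_zero_or_pos i with rfl | hi
  · simp [Ti_eq_one T (show ¬(1 ≤ 0 ∧ 0 < n) by omega)]
  · simpa [oneTensor_Ti T hi] using Subsemiring.subset_closure (Set.mem_range_self _)

theorem Pmat_mem_closure (d : ℕ) (T : Matrix (Fin d × Fin d) (Fin d × Fin d) ℂ) (n : ℕ) :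
    Pmat d T n ∈ Subsemiring.closure (Set.range (Ti d n T)) := by
  induction n with
  | zero => exact one_mem _
  | succ n ih =>
    exact mul_mem (oneTensor_mem_closure ih) (sum_mem fun k _ => prodT_mem_closure _ _ T k)

/-- Let `T` be a braided operator on `H ⊗ H` with the operators `P_n` defined as usual.
Then `(1 ⊗ P_n)(T_1 T_2 ⋯ T_n) = (T_1 T_2 ⋯ T_n)(P_n ⊗ 1)` on `H^{⊗(n+1)}`. -/
theorem oneTensorP_mul_prodT (d n : ℕ) (T : Matrix (Fin d × Fin d) (Fin d × Fin d) ℂ)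
    (hbraid : Braided d T) :
    oneTensor d n (Pmat d T n) * prodT d (n + 1) T n =
      prodT d (n + 1) T n * tensorOne d n (Pmat d T n) := by
  suffices Subsemiring.closure (Set.range (Ti d n T)) ≤
      (oneTensorHom d n).intertwiners (tensorOneHom d n) (prodT d (n + 1) T n) from
    this (Pmat_mem_closure d T n)
  rw [Subsemiring.closure_le]
  rintro _ ⟨i, rfl⟩
  by_cases hi : 1 ≤ i ∧ i < n
  · change oneTensor d n _ * _ = _ * tensorOne d n _
    rw [oneTensor_Ti T hi.1, tensorOne_Ti T hi.1 hi.2]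
    exact Ti_succ_mul_prodT hbraid hi.1 hi.2 (by omega)
  · simp [RingHom.intertwiners, Ti_eq_one T hi]

end Wick
end

section
/- Let T_1,...,T_n be self-adjoint contractions on a Hilbert space K satisfying the braid relations, and U_n = (T_1⋯T_n)(T_1⋯T_{n-1})⋯T_1. If v ∈ ker(1 − U_n²), then T_i² v = v for all i = 1,...,n. -/
/-!
Since `U_n` is self-adjoint, `v = U_n² v = U_n U_n^* v`. The braid relations let any `T_i` be
pulled out of `U_n` on the left, `U_n = T_i W` with `W` a word in the `T_j`, hence a contraction.
Then `v = T_i (W W^* T_i v)` forces `‖v‖ ≤ ‖T_i v‖`, and a contraction `S` with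
`‖v‖ ≤ ‖S^* v‖` satisfies `S S^* v = v`.
-/

namespace Wick

variable {K : Type*} [NormedAddCommGroup K] [InnerProductSpace ℂ K] [CompleteSpace K]

/-- `T_1 T_2 ⋯ T_k`. -/
noncomputable def prodOp (T : ℕ → (K →L[ℂ] K)) (k : ℕ) : K →L[ℂ] K :=
  ((List.range k).map (fun j => T (j + 1))).prod

/-- `U_n = (T_1 ⋯ T_n)(T_1 ⋯ T_{n-1}) ⋯ (T_1 T_2) T_1`. -/
noncomputable def Uop (T : ℕ → (K →L[ℂ] K)) (n : ℕ) : K →L[ℂ] K :=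
  ((List.range n).map (fun j => prodOp T (n - j))).prod

end Wick

theorem Submonoid.norm_le_one_of_mem_closure {R : Type*} [SeminormedRing R]
    (h1 : ‖(1 : R)‖ ≤ 1) {s : Set R} (hs : ∀ x ∈ s, ‖x‖ ≤ 1) {x : R}
    (hx : x ∈ Submonoid.closure s) : ‖x‖ ≤ 1 := by
  induction hx using Submonoid.closure_induction with
  | mem x hx => exact hs x hx
  | one => exact h1
  | mul x y _ _ hx hy => exact (norm_mul_le x y).trans (mul_le_one₀ hx (norm_nonneg y) hy)

namespace ContinuousLinearMap

theorem norm_apply_le_of_norm_le_one {𝕜 E F : Type*} [NontriviallyNormedField 𝕜]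
    [SeminormedAddCommGroup E] [SeminormedAddCommGroup F] [NormedSpace 𝕜 E] [NormedSpace 𝕜 F]
    {S : E →L[𝕜] F} (hS : ‖S‖ ≤ 1) (x : E) : ‖S x‖ ≤ ‖x‖ := by
  simpa using S.le_of_opNorm_le hS x

variable {𝕜 E : Type*} [RCLike 𝕜] [NormedAddCommGroup E] [InnerProductSpace 𝕜 E]
  [CompleteSpace E]

theorem norm_star_le_one {S : E →L[𝕜] E} (hS : ‖S‖ ≤ 1) : ‖star S‖ ≤ 1 := by
  rwa [star_eq_adjoint, LinearIsometryEquiv.norm_map]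

theorem apply_star_apply_eq_of_norm_le {S : E →L[𝕜] E} (hS : ‖S‖ ≤ 1) {v : E}
    (hv : ‖v‖ ≤ ‖star S v‖) : S (star S v) = v := by
  have hnorm : ‖star S v‖ = ‖v‖ :=
    le_antisymm (norm_apply_le_of_norm_le_one (norm_star_le_one hS) v) hv
  refine eq_of_norm_le_re_inner_eq_norm_sq (𝕜 := 𝕜) ?_ ?_
  · exact (norm_apply_le_of_norm_le_one hS _).trans hnorm.le
  · rw [← adjoint_inner_right, ← star_eq_adjoint, inner_self_eq_norm_sq, hnorm]

theorem apply_star_apply_eq_of_mul_apply {S W : E →L[𝕜] E} (hS : ‖S‖ ≤ 1) (hW : ‖W‖ ≤ 1)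
    {v : E} (hv : (S * W) (star (S * W) v) = v) : S (star S v) = v := by
  refine apply_star_apply_eq_of_norm_le hS ?_
  calc ‖v‖ = ‖(S * W) (star (S * W) v)‖ := by rw [hv]
    _ = ‖S (W (star W (star S v)))‖ := by rw [star_mul]; rfl
    _ ≤ ‖W (star W (star S v))‖ := norm_apply_le_of_norm_le_one hS _
    _ ≤ ‖star W (star S v)‖ := norm_apply_le_of_norm_le_one hW _
    _ ≤ ‖star S v‖ := norm_apply_le_of_norm_le_one (norm_star_le_one hW) _

end ContinuousLinearMap

namespace Wick

variable {K : Type*} [NormedAddCommGroup K] [InnerProductSpace ℂ K]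

theorem prodOp_succ (T : ℕ → (K →L[ℂ] K)) (k : ℕ) :
    prodOp T (k + 1) = prodOp T k * T (k + 1) := by
  simp [prodOp, List.range_succ]

theorem prodOp_succ' (T : ℕ → (K →L[ℂ] K)) (k : ℕ) :
    prodOp T (k + 1) = T 1 * ((List.range k).map (fun j => T (j + 2))).prod := by
  simp [prodOp, List.range_succ_eq_map, Function.comp_def]

theorem Uop_succ (T : ℕ → (K →L[ℂ] K)) (k : ℕ) :
    Uop T (k + 1) = prodOp T (k + 1) * Uop T k := by
  simp [Uop, List.range_succ_eq_map, Function.comp_def]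

@[simp] theorem prodOp_zero (T : ℕ → (K →L[ℂ] K)) : prodOp T 0 = 1 := rfl

@[simp] theorem Uop_zero (T : ℕ → (K →L[ℂ] K)) : Uop T 0 = 1 := rfl

section Braid

variable {n : ℕ} {T : ℕ → (K →L[ℂ] K)}

theorem prodOp_mem_closure {k : ℕ} (hk : k ≤ n) :
    prodOp T k ∈ Submonoid.closure (T '' Set.Icc 1 n) := by
  refine Submonoid.list_prod_mem _ ?_
  simp only [List.mem_map, List.mem_range]
  rintro _ ⟨j, hj, rfl⟩
  exact Submonoid.subset_closure ⟨j + 1, ⟨by omega, by omega⟩, rfl⟩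

theorem Uop_mem_closure {k : ℕ} (hk : k ≤ n) :
    Uop T k ∈ Submonoid.closure (T '' Set.Icc 1 n) := by
  refine Submonoid.list_prod_mem _ ?_
  simp only [List.mem_map, List.mem_range]
  rintro _ ⟨j, hj, rfl⟩
  exact prodOp_mem_closure (by omega)

theorem commute_prodOp (hcomm : ∀ i j, 1 ≤ i → j ≤ n → i + 2 ≤ j → T i * T j = T j * T i)
    {k m : ℕ} (hkm : k + 1 < m) (hm : m ≤ n) : Commute (prodOp T k) (T m) := by
  induction k with
  | zero => exact Commute.one_left _
  | succ k ih =>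
    rw [prodOp_succ]
    exact (ih (by omega)).mul_left (hcomm _ _ (by omega) hm (by omega))

theorem commute_Uop (hcomm : ∀ i j, 1 ≤ i → j ≤ n → i + 2 ≤ j → T i * T j = T j * T i)
    {k m : ℕ} (hkm : k + 1 < m) (hm : m ≤ n) : Commute (Uop T k) (T m) := by
  induction k with
  | zero => exact Commute.one_left _
  | succ k ih =>
    rw [Uop_succ]
    exact (commute_prodOp hcomm hkm hm).mul_left (ih (by omega))

theorem semiconjBy_prodOp
    (hbraid : ∀ i, 1 ≤ i → i + 1 ≤ n → T i * T (i + 1) * T i = T (i + 1) * T i * T (i + 1))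
    (hcomm : ∀ i j, 1 ≤ i → j ≤ n → i + 2 ≤ j → T i * T j = T j * T i)
    {i m : ℕ} (hi : 1 ≤ i) (him : i + 1 ≤ m) (hm : m ≤ n) :
    SemiconjBy (prodOp T m) (T i) (T (i + 1)) := by
  induction m, him using Nat.le_induction with
  | base =>
    obtain ⟨j, rfl⟩ : ∃ j, i = j + 1 := ⟨i - 1, by omega⟩
    have hc : Commute (prodOp T j) (T (j + 2)) := commute_prodOp hcomm (by omega) hm
    unfold SemiconjBy
    rw [prodOp_succ, prodOp_succ]
    calc prodOp T j * T (j + 1) * T (j + 2) * T (j + 1)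
        = prodOp T j * (T (j + 1) * T (j + 2) * T (j + 1)) := by simp only [mul_assoc]
      _ = prodOp T j * T (j + 2) * (T (j + 1) * T (j + 2)) := by
        rw [hbraid (j + 1) hi hm]; simp only [mul_assoc]
      _ = T (j + 2) * (prodOp T j * T (j + 1) * T (j + 2)) := by
        rw [hc.eq]; simp only [mul_assoc]
  | succ m _ ih =>
    rw [prodOp_succ]
    exact (ih (by omega)).mul_left (hcomm i (m + 1) hi hm (by omega)).symm

theorem exists_Uop_eq_mul
    (hbraid : ∀ i, 1 ≤ i → i + 1 ≤ n → T i * T (i + 1) * T i = T (i + 1) * T i * T (i + 1))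
    (hcomm : ∀ i j, 1 ≤ i → j ≤ n → i + 2 ≤ j → T i * T j = T j * T i)
    {m i : ℕ} (hm : m ≤ n) (hi : 1 ≤ i) (him : i ≤ m) :
    ∃ W ∈ Submonoid.closure (T '' Set.Icc 1 n), Uop T m = T i * W := by
  induction m generalizing i with
  | zero => omega
  | succ m ih =>
    rcases eq_or_lt_of_le hi with rfl | hi'
    · refine ⟨((List.range m).map fun j => T (j + 2)).prod * Uop T m,
        mul_mem (Submonoid.list_prod_mem _ ?_) (Uop_mem_closure (by omega)), by
          rw [Uop_succ, prodOp_succ', mul_assoc]⟩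
      simp only [List.mem_map, List.mem_range]
      rintro _ ⟨j, hj, rfl⟩
      exact Submonoid.subset_closure ⟨j + 2, ⟨by omega, by omega⟩, rfl⟩
    · obtain ⟨j, rfl⟩ : ∃ j, i = j + 1 := ⟨i - 1, by omega⟩
      have hj : 1 ≤ j := by omega
      obtain ⟨W, hW, hUW⟩ := ih (by omega) hj (by omega)
      refine ⟨prodOp T (m + 1) * W, mul_mem (prodOp_mem_closure hm) hW, ?_⟩
      rw [Uop_succ, hUW, ← mul_assoc, (semiconjBy_prodOp hbraid hcomm hj (by omega) hm).eq,
        mul_assoc]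

end Braid

variable [CompleteSpace K]

theorem prodOp_succ_mul_Uop {n : ℕ} {T : ℕ → (K →L[ℂ] K)}
    (hsa : ∀ i, 1 ≤ i → i ≤ n → IsSelfAdjoint (T i))
    (hcomm : ∀ i j, 1 ≤ i → j ≤ n → i + 2 ≤ j → T i * T j = T j * T i)
    {k : ℕ} (hk : k + 1 ≤ n) :
    prodOp T (k + 1) * Uop T k = Uop T k * star (prodOp T (k + 1)) := by
  induction k with
  | zero => simp [prodOp_succ, (hsa 1 le_rfl hk).star_eq]
  | succ k ih =>
    have hU : Commute (Uop T k) (T (k + 2)) := commute_Uop hcomm (by omega) hk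
    rw [prodOp_succ T (k + 1), Uop_succ, star_mul, (hsa (k + 2) (by omega) hk).star_eq]
    calc prodOp T (k + 1) * T (k + 2) * (prodOp T (k + 1) * Uop T k)
        = prodOp T (k + 1) * (T (k + 2) * Uop T k) * star (prodOp T (k + 1)) := by
          rw [ih (by omega)]; simp only [mul_assoc]
      _ = prodOp T (k + 1) * Uop T k * (T (k + 2) * star (prodOp T (k + 1))) := by
          rw [← hU.eq]; simp only [mul_assoc]

theorem isSelfAdjoint_Uop {n : ℕ} {T : ℕ → (K →L[ℂ] K)}
    (hsa : ∀ i, 1 ≤ i → i ≤ n → IsSelfAdjoint (T i))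
    (hcomm : ∀ i j, 1 ≤ i → j ≤ n → i + 2 ≤ j → T i * T j = T j * T i)
    {k : ℕ} (hk : k ≤ n) : IsSelfAdjoint (Uop T k) := by
  induction k with
  | zero => exact IsSelfAdjoint.one _
  | succ k ih =>
    rw [isSelfAdjoint_iff, Uop_succ, star_mul, (ih (by omega)).star_eq]
    exact (prodOp_succ_mul_Uop hsa hcomm hk).symm

/-- Let `T_1, ..., T_n` be self-adjoint contractions on a Hilbert space `K` satisfying
the braid relations, and `U_n = (T_1⋯T_n)(T_1⋯T_{n-1})⋯T_1`.  If `v ∈ ker(1 − U_n²)`,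
then `T_i² v = v` for all `i = 1, ..., n`. -/
theorem ker_one_sub_Usq (n : ℕ) (T : ℕ → (K →L[ℂ] K))
    (hsa : ∀ i, 1 ≤ i → i ≤ n → IsSelfAdjoint (T i))
    (hcontr : ∀ i, 1 ≤ i → i ≤ n → ‖T i‖ ≤ 1)
    (hbraid : ∀ i, 1 ≤ i → i + 1 ≤ n → T i * T (i + 1) * T i = T (i + 1) * T i * T (i + 1))
    (hcomm : ∀ i j, 1 ≤ i → j ≤ n → i + 2 ≤ j → T i * T j = T j * T i)
    (v : K) (hv : ((1 - (Uop T n) ^ 2 : K →L[ℂ] K)) v = 0) (i : ℕ) (hi1 : 1 ≤ i) (hi2 : i ≤ n) :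
    T i (T i v) = v := by
  obtain ⟨W, hW, hUW⟩ := exists_Uop_eq_mul hbraid hcomm le_rfl hi1 hi2
  have hWle : ‖W‖ ≤ 1 := Submonoid.norm_le_one_of_mem_closure ContinuousLinearMap.norm_id_le
    (by rintro _ ⟨j, hj, rfl⟩; exact hcontr j hj.1 hj.2) hW
  have hUv : (T i * W) (star (T i * W) v) = v := by
    rw [← hUW, (isSelfAdjoint_Uop hsa hcomm le_rfl).star_eq, eq_comm]
    simpa [sq, sub_eq_zero] using hv
  simpa [(hsa i hi1 hi2).star_eq] using
    ContinuousLinearMap.apply_star_apply_eq_of_mul_apply (hcontr i hi1 hi2) hWle hUv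

end Wick
end
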